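/- Let m ≥ 1 be an integer and a ∈ 𝔻. Set X = (m−1)|a|² + (m+1). Then X² − 4m²|a|² ≥ 0, and the point w = 2am / (X + √(X² − 4m²|a|²)) satisfies |w| < 1, the derivative of B(z) = z^m·(z − a)/(1 − conj(a)·z) vanishes at w, and every z ∈ 𝔻 with B'(z) = 0 equals either w or 0. -/

import Mathlib

/-!
The numerator of `B'` is, up to sign, `z^(m-1)` times the quadratic `m ā z² − X z + m a`, whose
roots have product `a / ā` of modulus one, so at most one of them lies in `𝔻`. Writing
`S = X + √(X² − 4m²|a|²)`, the quadratic factors as `(S z − 2am)(2mā z − S) / (2S)`. Since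
`S ≥ X > 2m|a|`, the root `w = 2am/S` lies in `𝔻` and the other root `S/(2mā)` outside.
-/

open ComplexConjugate

noncomputable section

def blaschke (m : ℕ) (a : ℂ) (z : ℂ) : ℂ :=
  z ^ m * ((z - a) / (1 - conj a * z))

def blaschkeCritCoeff (m : ℕ) (a : ℂ) : ℝ :=
  ((m : ℝ) - 1) * ‖a‖ ^ 2 + ((m : ℝ) + 1)

def blaschkeCritPoly (m : ℕ) (a z : ℂ) : ℂ :=
  m * conj a * z ^ 2 - blaschkeCritCoeff m a * z + m * a

def blaschkeCritDenom (m : ℕ) (a : ℂ) : ℝ :=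
  blaschkeCritCoeff m a + Real.sqrt (blaschkeCritCoeff m a ^ 2 - 4 * (m : ℝ) ^ 2 * ‖a‖ ^ 2)

def blaschkeCritPoint (m : ℕ) (a : ℂ) : ℂ :=
  2 * a * (m : ℂ) / (blaschkeCritDenom m a : ℂ)

end

theorem quadratic_mul_eq_mul_of_sq_eq {R : Type*} [CommRing R] {X s b c : R}
    (hs : s ^ 2 = X ^ 2 - 4 * b * c) (z : R) :
    2 * (X + s) * (c * z ^ 2 - X * z + b) = ((X + s) * z - 2 * b) * (2 * c * z - (X + s)) := by
  linear_combination z * hs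

theorem one_sub_conj_mul_ne_zero {a z : ℂ} (ha : ‖a‖ < 1) (hz : ‖z‖ < 1) :
    1 - conj a * z ≠ 0 := by
  refine sub_ne_zero.mpr fun h => ?_
  have : ‖conj a * z‖ < 1 := by
    rw [norm_mul, Complex.norm_conj]
    exact mul_lt_one_of_nonneg_of_lt_one_left (norm_nonneg a) ha hz.le
  simp [← h] at this

theorem hasDerivAt_blaschke {m : ℕ} (hm : 1 ≤ m) {a z : ℂ} (hz : 1 - conj a * z ≠ 0) :
    HasDerivAt (blaschke m a)
      (-(z ^ (m - 1) * blaschkeCritPoly m a z) / (1 - conj a * z) ^ 2) z := by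
  obtain ⟨n, rfl⟩ : ∃ n, m = n + 1 := ⟨m - 1, by omega⟩
  refine ((hasDerivAt_pow (n + 1) z).mul (((hasDerivAt_id' z).sub_const a).div
    (((hasDerivAt_id' z).const_mul (conj a)).const_sub 1) hz)).congr_deriv ?_
  have hc : conj a * a = (‖a‖ : ℂ) ^ 2 := Complex.conj_mul' a
  simp only [blaschkeCritPoly, blaschkeCritCoeff, Pi.div_apply, Nat.add_sub_cancel, mul_div_assoc']
  rw [div_add_div _ _ hz (pow_ne_zero 2 hz), div_eq_div_iff (mul_ne_zero hz (pow_ne_zero 2 hz))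
    (pow_ne_zero 2 hz)]
  push_cast
  linear_combination (n * z * z ^ n * (1 - conj a * z) ^ 3) * hc

theorem two_mul_natCast_mul_norm_lt_blaschkeCritCoeff (m : ℕ) {a : ℂ} (ha : ‖a‖ < 1) :
    2 * m * ‖a‖ < blaschkeCritCoeff m a := by
  have hm : (0 : ℝ) ≤ m := m.cast_nonneg
  rw [blaschkeCritCoeff]
  -- `X − 2m|a| = m(1 − |a|)² + (1 − |a|²)`
  nlinarith [mul_nonneg hm (sq_nonneg (1 - ‖a‖)), norm_nonneg a]

theorem blaschkeCritCoeff_sq_sub_nonneg (m : ℕ) {a : ℂ} (ha : ‖a‖ < 1) :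
    0 ≤ blaschkeCritCoeff m a ^ 2 - 4 * (m : ℝ) ^ 2 * ‖a‖ ^ 2 := by
  have h := two_mul_natCast_mul_norm_lt_blaschkeCritCoeff m ha
  have h0 : 0 ≤ 2 * (m : ℝ) * ‖a‖ := by positivity
  nlinarith

theorem two_mul_natCast_mul_norm_lt_blaschkeCritDenom (m : ℕ) {a : ℂ} (ha : ‖a‖ < 1) :
    2 * m * ‖a‖ < blaschkeCritDenom m a :=
  (two_mul_natCast_mul_norm_lt_blaschkeCritCoeff m ha).trans_le
    (le_add_of_nonneg_right (Real.sqrt_nonneg _))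

theorem blaschkeCritDenom_pos (m : ℕ) {a : ℂ} (ha : ‖a‖ < 1) : 0 < blaschkeCritDenom m a :=
  (by positivity : (0 : ℝ) ≤ 2 * m * ‖a‖).trans_lt
    (two_mul_natCast_mul_norm_lt_blaschkeCritDenom m ha)

theorem two_mul_blaschkeCritDenom_mul_blaschkeCritPoly (m : ℕ) {a : ℂ} (ha : ‖a‖ < 1) (z : ℂ) :
    2 * blaschkeCritDenom m a * blaschkeCritPoly m a z =
      (blaschkeCritDenom m a * z - 2 * (m * a)) * (2 * (m * conj a) * z - blaschkeCritDenom m a) := by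
  have hs := Real.sq_sqrt (blaschkeCritCoeff_sq_sub_nonneg m ha)
  have hc : conj a * a = (‖a‖ : ℂ) ^ 2 := Complex.conj_mul' a
  have hsC : (Real.sqrt (blaschkeCritCoeff m a ^ 2 - 4 * (m : ℝ) ^ 2 * ‖a‖ ^ 2) : ℂ) ^ 2 =
      (blaschkeCritCoeff m a : ℂ) ^ 2 - 4 * (m * a) * (m * conj a) := by
    rw [← Complex.ofReal_pow, hs]
    push_cast
    linear_combination 4 * (m : ℂ) ^ 2 * hc
  simpa [blaschkeCritDenom, blaschkeCritPoly, mul_assoc] using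
    quadratic_mul_eq_mul_of_sq_eq hsC z

theorem norm_blaschkeCritPoint_lt_one (m : ℕ) {a : ℂ} (ha : ‖a‖ < 1) :
    ‖blaschkeCritPoint m a‖ < 1 := by
  have hS := blaschkeCritDenom_pos m ha
  rw [blaschkeCritPoint, norm_div, Complex.norm_real, Real.norm_of_nonneg hS.le,
    div_lt_one hS]
  simpa [mul_comm, mul_left_comm] using two_mul_natCast_mul_norm_lt_blaschkeCritDenom m ha

theorem blaschkeCritPoly_eq_zero_iff (m : ℕ) {a z : ℂ} (ha : ‖a‖ < 1) (hz : ‖z‖ < 1) :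
    blaschkeCritPoly m a z = 0 ↔ z = blaschkeCritPoint m a := by
  have hS := blaschkeCritDenom_pos m ha
  have hSC : (blaschkeCritDenom m a : ℂ) ≠ 0 := Complex.ofReal_ne_zero.mpr hS.ne'
  have hfac := two_mul_blaschkeCritDenom_mul_blaschkeCritPoly m ha z
  have hfar : 2 * (m * conj a) * z - blaschkeCritDenom m a ≠ 0 := by
    refine sub_ne_zero.mpr fun h => ?_
    have hle : ‖2 * (m * conj a) * z‖ ≤ 2 * m * ‖a‖ := by
      rw [norm_mul, norm_mul, norm_mul, Complex.norm_conj, Complex.norm_natCast, Complex.norm_two,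
        ← mul_assoc]
      exact mul_le_of_le_one_right (by positivity) hz.le
    rw [h, Complex.norm_real, Real.norm_of_nonneg hS.le] at hle
    exact hle.not_gt (two_mul_natCast_mul_norm_lt_blaschkeCritDenom m ha)
  rw [blaschkeCritPoint, eq_div_iff hSC, ← mul_right_inj' (mul_ne_zero two_ne_zero hSC), hfac,
    mul_zero, mul_eq_zero, or_iff_left hfar, sub_eq_zero]
  constructor <;> intro h <;> linear_combination h

theorem deriv_blaschke_eq_zero_iff {m : ℕ} (hm : 1 ≤ m) {a z : ℂ} (ha : ‖a‖ < 1) (hz : ‖z‖ < 1) :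
    deriv (blaschke m a) z = 0 ↔ z ^ (m - 1) * blaschkeCritPoly m a z = 0 := by
  have hD := one_sub_conj_mul_ne_zero ha hz
  rw [(hasDerivAt_blaschke hm hD).deriv, div_eq_zero_iff, neg_eq_zero,
    or_iff_left (pow_ne_zero 2 hD)]

/-- Let `m ≥ 1` and `a ∈ 𝔻`. Set `X = (m−1)|a|² + (m+1)`. Then
`X² − 4m²|a|² ≥ 0`, and `w = 2am/(X + √(X² − 4m²|a|²))` satisfies `|w| < 1`, the
derivative of `B(z) = z^m (z − a)/(1 − conj a · z)` vanishes at `w`, and every zero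
of `B'` in `𝔻` equals `w` or `0`. -/
theorem stmt8 (m : ℕ) (hm : 1 ≤ m) (a : ℂ) (ha : ‖a‖ < 1) :
    0 ≤ (((m : ℝ) - 1) * ‖a‖ ^ 2 + ((m : ℝ) + 1)) ^ 2 - 4 * (m : ℝ) ^ 2 * ‖a‖ ^ 2 ∧
    (let X : ℝ := ((m : ℝ) - 1) * ‖a‖ ^ 2 + ((m : ℝ) + 1)
     let w : ℂ := 2 * a * (m : ℂ) /
        ((X + Real.sqrt (X ^ 2 - 4 * (m : ℝ) ^ 2 * ‖a‖ ^ 2) : ℝ) : ℂ)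
     ‖w‖ < 1 ∧
     deriv (fun z : ℂ => z ^ m * ((z - a) / (1 - (starRingEnd ℂ) a * z))) w = 0 ∧
     ∀ z : ℂ, ‖z‖ < 1 →
        deriv (fun z : ℂ => z ^ m * ((z - a) / (1 - (starRingEnd ℂ) a * z))) z = 0 →
        z = w ∨ z = 0) := by
  refine ⟨blaschkeCritCoeff_sq_sub_nonneg m ha, ?_⟩
  change ‖blaschkeCritPoint m a‖ < 1 ∧ deriv (blaschke m a) (blaschkeCritPoint m a) = 0 ∧
    ∀ z : ℂ, ‖z‖ < 1 → deriv (blaschke m a) z = 0 → z = blaschkeCritPoint m a ∨ z = 0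
  have hw := norm_blaschkeCritPoint_lt_one m ha
  refine ⟨hw, ?_, fun z hz hBz => ?_⟩
  · rw [deriv_blaschke_eq_zero_iff hm ha hw, (blaschkeCritPoly_eq_zero_iff m ha hw).mpr rfl,
      mul_zero]
  · rw [deriv_blaschke_eq_zero_iff hm ha hz, mul_eq_zero, blaschkeCritPoly_eq_zero_iff m ha hz]
      at hBz
    exact hBz.symm.imp_right (pow_eq_zero_iff'.mp · |>.1)
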